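/- Let k be a non-negative integer such that ‖x*‖² = k for every optimal solution x* of BP. Then there exists ε > 0 such that for every optimal solution x* ⊕ y* ⊕ z* of BPD', the optimal diameter satisfies diam(BP) = 2(k − e^T z*). -/

import Mathlib

open Matrix Finset

def BinaryVec {n : ℕ} (x : Fin n → ℝ) : Prop := ∀ i, x i = 0 ∨ x i = 1

/-- Feasibility for BP: `Ax ≤ b`, `x ∈ {0,1}ⁿ`. -/
def FeasBP {n m : ℕ} (A : Matrix (Fin m) (Fin n) ℝ) (b : Fin m → ℝ)
    (x : Fin n → ℝ) : Prop :=
  BinaryVec x ∧ A.mulVec x ≤ b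

/-- Optimality for BP with objective `cᵀ x`. -/
def OptBP {n m : ℕ} (A : Matrix (Fin m) (Fin n) ℝ) (b : Fin m → ℝ)
    (c : Fin n → ℝ) (x : Fin n → ℝ) : Prop :=
  FeasBP A b x ∧ ∀ x', FeasBP A b x' → ∑ i, c i * x' i ≤ ∑ i, c i * x i

/-- Feasibility for BPD' (BPD without the constraint `-x - y - z ≤ -e`). -/
def FeasBPD' {n m : ℕ} (A : Matrix (Fin m) (Fin n) ℝ) (b : Fin m → ℝ)
    (x y z : Fin n → ℝ) : Prop :=
  BinaryVec x ∧ BinaryVec y ∧ BinaryVec z ∧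
  A.mulVec x ≤ b ∧ A.mulVec y ≤ b ∧
  (∀ i, x i + y i - z i ≤ 1)

/-- The objective `cᵀ(x+y) - ε eᵀ z`. -/
def objBPD {n : ℕ} (c : Fin n → ℝ) (ε : ℝ) (x y z : Fin n → ℝ) : ℝ :=
  (∑ i, c i * (x i + y i)) - ε * ∑ i, z i

/-- The set of squared distances `‖x* - y*‖²` between pairs of optimal solutions of BP;
its greatest element is the optimal diameter `diam(BP)`. -/
def diamSet {n m : ℕ} (A : Matrix (Fin m) (Fin n) ℝ) (b : Fin m → ℝ)
    (c : Fin n → ℝ) : Set ℝ :=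
  {r | ∃ x y, OptBP A b c x ∧ OptBP A b c y ∧ r = ∑ i, (x i - y i) ^ 2}


/-! The feasible set of BP is a finite set of binary vectors, so there is a gap `δ > 0`
between the optimal value `v` and every non-optimal value. With `ε = δ / (k + 1)`, the pair
`(x₀, x₀, x₀ * x₀)` for an optimal `x₀` forces every optimal `x ⊕ y ⊕ z` of BPD' to have
`cᵀx + cᵀy > 2v - δ`, so `x` and `y` are optimal for BP. Among BP-optimal pairs the
objective of BPD' is `2v - ε eᵀz` and is maximised with `z = x * y`, so `eᵀz` is the least
overlap `⟨x', y'⟩` of two optimal solutions, while `‖x' - y'‖² = 2(k - ⟨x', y'⟩)`. -/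

lemma BinaryVec.setOf_finite (n : ℕ) : {x : Fin n → ℝ | BinaryVec x}.Finite := by
  refine (Set.finite_range fun (f : Fin n → Bool) i => if f i then (1 : ℝ) else 0).subset ?_
  intro x hx
  refine ⟨fun i => decide (x i = 1), funext fun i => ?_⟩
  rcases hx i with h | h <;> simp [h]

lemma BinaryVec.mul {n : ℕ} {x y : Fin n → ℝ} (hx : BinaryVec x) (hy : BinaryVec y) :
    BinaryVec (x * y) := by
  intro i
  rcases hx i with h | h <;> simp [h, hy i]

lemma Set.Finite.exists_pos_le_of_pos {s : Set ℝ} (hs : s.Finite) :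
    ∃ δ > 0, ∀ t ∈ s, 0 < t → δ ≤ t := by
  rcases (s ∩ Set.Ioi 0).eq_empty_or_nonempty with hempty | hne
  · refine ⟨1, one_pos, fun t ht htpos => ?_⟩
    exact absurd (Set.mem_inter ht htpos) (hempty ▸ Set.notMem_empty t)
  · obtain ⟨δ, ⟨-, hδ⟩, hmin⟩ := Set.exists_min_image _ id (hs.inter_of_left _) hne
    exact ⟨δ, hδ, fun t ht htpos => hmin t ⟨ht, htpos⟩⟩

section

variable {n m : ℕ} {A : Matrix (Fin m) (Fin n) ℝ} {b : Fin m → ℝ} {c : Fin n → ℝ}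

lemma FeasBP.setOf_finite (A : Matrix (Fin m) (Fin n) ℝ) (b : Fin m → ℝ) :
    {x | FeasBP A b x}.Finite :=
  (BinaryVec.setOf_finite n).subset fun _ hx => hx.1

lemma exists_optBP (c : Fin n → ℝ) (hne : ∃ x, FeasBP A b x) : ∃ x, OptBP A b c x := by
  obtain ⟨x, hx, hmax⟩ :=
    Set.exists_max_image _ (fun x => ∑ i, c i * x i) (FeasBP.setOf_finite A b) hne
  exact ⟨x, hx, hmax⟩

lemma OptBP.sum_mul_eq {x y : Fin n → ℝ} (hx : OptBP A b c x) (hy : OptBP A b c y) :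
    ∑ i, c i * x i = ∑ i, c i * y i :=
  le_antisymm (hy.2 x hx.1) (hx.2 y hy.1)

lemma OptBP.of_sum_mul_eq {x x₀ : Fin n → ℝ} (hx : FeasBP A b x) (hx₀ : OptBP A b c x₀)
    (h : ∑ i, c i * x i = ∑ i, c i * x₀ i) : OptBP A b c x :=
  ⟨hx, fun x' hx' => h ▸ hx₀.2 x' hx'⟩

lemma exists_pos_gap_optBP (A : Matrix (Fin m) (Fin n) ℝ) (b : Fin m → ℝ) (c : Fin n → ℝ) :
    ∃ δ > 0, ∀ x x₀, FeasBP A b x → OptBP A b c x₀ →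
      ∑ i, c i * x₀ i - δ < ∑ i, c i * x i → OptBP A b c x := by
  have hfin := FeasBP.setOf_finite A b
  obtain ⟨δ, hδ, hle⟩ :=
    (hfin.image2 (fun x₀ x => ∑ i, c i * x₀ i - ∑ i, c i * x i) hfin).exists_pos_le_of_pos
  refine ⟨δ, hδ, fun x x₀ hx hx₀ hlt => OptBP.of_sum_mul_eq hx hx₀ ?_⟩
  have hgap_not_pos : ¬ 0 < ∑ i, c i * x₀ i - ∑ i, c i * x i := fun hpos =>
    (hle _ (Set.mem_image2_of_mem hx₀.1 hx) hpos).not_gt (by linarith)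
  linarith [hx₀.2 x hx]

lemma FeasBPD'.of_feasBP {x y : Fin n → ℝ} (hx : FeasBP A b x) (hy : FeasBP A b y) :
    FeasBPD' A b x y (x * y) := by
  refine ⟨hx.1, hy.1, hx.1.mul hy.1, hx.2, hy.2, fun i => ?_⟩
  rcases hx.1 i with h | h <;> rcases hy.1 i with h' | h' <;> norm_num [h, h']

lemma FeasBPD'.sum_mul_le {x y z : Fin n → ℝ} (h : FeasBPD' A b x y z) :
    ∑ i, x i * y i ≤ ∑ i, z i := by
  obtain ⟨hx, hy, hz, -, -, hxyz⟩ := h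
  refine Finset.sum_le_sum fun i _ => ?_
  have := hxyz i
  rcases hx i with h | h <;> rcases hy i with h' | h' <;> rcases hz i with h'' | h'' <;>
    simp only [h, h', h''] at this ⊢ <;> linarith

lemma objBPD_eq (c : Fin n → ℝ) (ε : ℝ) (x y z : Fin n → ℝ) :
    objBPD c ε x y z = ∑ i, c i * x i + ∑ i, c i * y i - ε * ∑ i, z i := by
  simp only [objBPD, mul_add, Finset.sum_add_distrib]

lemma FeasBPD'.feasBP_left {x y z : Fin n → ℝ} (h : FeasBPD' A b x y z) : FeasBP A b x :=
  ⟨h.1, h.2.2.2.1⟩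

lemma FeasBPD'.feasBP_right {x y z : Fin n → ℝ} (h : FeasBPD' A b x y z) : FeasBP A b y :=
  ⟨h.2.1, h.2.2.2.2.1⟩

def OptBPD' (A : Matrix (Fin m) (Fin n) ℝ) (b : Fin m → ℝ) (c : Fin n → ℝ) (ε : ℝ)
    (x y z : Fin n → ℝ) : Prop :=
  FeasBPD' A b x y z ∧
    ∀ x' y' z', FeasBPD' A b x' y' z' → objBPD c ε x' y' z' ≤ objBPD c ε x y z

lemma OptBPD'.optBP {δ ε : ℝ} {x₀ x y z : Fin n → ℝ}
    (hgap : ∀ x x₀, FeasBP A b x → OptBP A b c x₀ →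
      ∑ i, c i * x₀ i - δ < ∑ i, c i * x i → OptBP A b c x)
    (hε : 0 ≤ ε) (hx₀ : OptBP A b c x₀) (hεδ : ε * ∑ i, x₀ i ^ 2 < δ)
    (h : OptBPD' A b c ε x y z) : OptBP A b c x ∧ OptBP A b c y := by
  have hcompare := h.2 x₀ x₀ _ (FeasBPD'.of_feasBP hx₀.1 hx₀.1)
  simp only [objBPD_eq, ← sq, Pi.pow_apply] at hcompare
  have hpenalty : 0 ≤ ε * ∑ i, z i :=
    mul_nonneg hε <| Finset.sum_nonneg fun i _ => by
      rcases h.1.2.2.1 i with hz | hz <;> simp [hz]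
  have hx_le := hx₀.2 x h.1.feasBP_left
  have hy_le := hx₀.2 y h.1.feasBP_right
  exact ⟨hgap x x₀ h.1.feasBP_left hx₀ (by linarith),
    hgap y x₀ h.1.feasBP_right hx₀ (by linarith)⟩

lemma OptBPD'.sum_le_sum_mul {ε : ℝ} {x y z x' y' : Fin n → ℝ} (hε : 0 < ε)
    (h : OptBPD' A b c ε x y z) (hx : OptBP A b c x) (hy : OptBP A b c y)
    (hx' : OptBP A b c x') (hy' : OptBP A b c y') :
    ∑ i, z i ≤ ∑ i, x' i * y' i := by
  have hcompare := h.2 x' y' _ (FeasBPD'.of_feasBP hx'.1 hy'.1)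
  simp only [objBPD_eq, Pi.mul_apply, hx'.sum_mul_eq hx, hy'.sum_mul_eq hy] at hcompare
  exact le_of_mul_le_mul_left (by linarith) hε

end

theorem stmt6 {n m : ℕ} (A : Matrix (Fin m) (Fin n) ℝ) (b : Fin m → ℝ)
    (c : Fin n → ℝ) (hne : ∃ x, FeasBP A b x)
    (k : ℕ) (hk : ∀ x, OptBP A b c x → ∑ i, (x i) ^ 2 = (k : ℝ)) :
    ∃ ε > (0 : ℝ), ∀ x y z, FeasBPD' A b x y z →
      (∀ x' y' z', FeasBPD' A b x' y' z' →
        objBPD c ε x' y' z' ≤ objBPD c ε x y z) →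
      IsGreatest (diamSet A b c) (2 * ((k : ℝ) - ∑ i, z i)) := by
  obtain ⟨δ, hδ, hgap⟩ := exists_pos_gap_optBP A b c
  obtain ⟨x₀, hx₀⟩ := exists_optBP c hne
  have hε : 0 < δ / (k + 1) := by positivity
  refine ⟨δ / (k + 1), hε, fun x y z hfeas hopt => ?_⟩
  have hεδ : δ / (k + 1) * ∑ i, x₀ i ^ 2 < δ := by
    rw [hk x₀ hx₀, div_mul_eq_mul_div, div_lt_iff₀ (by positivity)]
    linarith
  have h : OptBPD' A b c _ x y z := ⟨hfeas, hopt⟩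
  obtain ⟨hx, hy⟩ := h.optBP hgap hε.le hx₀ hεδ
  have hdist : ∀ x' y', OptBP A b c x' → OptBP A b c y' →
      ∑ i, (x' i - y' i) ^ 2 = 2 * ((k : ℝ) - ∑ i, x' i * y' i) := by
    intro x' y' hx' hy'
    simp only [sub_sq, Finset.sum_add_distrib, Finset.sum_sub_distrib, hk x' hx', hk y' hy',
      mul_assoc, ← Finset.mul_sum]
    ring
  have hz : ∑ i, z i = ∑ i, x i * y i :=
    le_antisymm (h.sum_le_sum_mul hε hx hy hx hy) hfeas.sum_mul_le
  refine ⟨⟨x, y, hx, hy, by rw [hdist x y hx hy, hz]⟩, ?_⟩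
  rintro _ ⟨x', y', hx', hy', rfl⟩
  rw [hdist x' y' hx' hy']
  linarith [h.sum_le_sum_mul hε hx hy hx' hy']
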